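/- arXiv:2107.03092 — 3 statements merged into one kernel-verified Lean document; each statement's English description precedes it below -/
import Mathlib

section
/- Let G = (V, A) be a (weakly) connected finite directed graph and k a positive integer. Define the undirected auxiliary graph 𝒢 whose vertex set consists of all v ∈ V such that G has a v-directed tree with k arcs, and where distinct u, v ∈ V(𝒢) are joined by an edge if and only if (1) G has a directed path from u to v or from v to u, or (2) there exists w ∈ N⁺_G(u) ∩ N⁺_G(v) such that G[V \ {u, v}] has a w-directed tree with k − 1 arcs. Let T^s and T^g be directed trees in G with k arcs and roots r^s and r^g, respectively. Then there is a path between r^s and r^g in 𝒢 if and only if there is a reconfiguration sequence between T^s and T^g in which every intermediate subgraph is a directed tree in G with k arcs. -/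
/-!
Two `k`-arc trees with the same root are always connected by swaps through trees with that
root: remove a leaf from each, connect the remainders by induction, and lift every swap of the
smaller trees to at most one swap of the larger ones by putting a leaf back.

A path `u → v` in `G` lets the root of a tree move from `v` back to `u`, one arc per swap
(re-root at the tail of the arc, dropping its in-arc or a leaf), and a common out-neighbour `w`
with a `(k - 1)`-arc `w`-tree `U` avoiding `u, v` gives the swap `U + (u, w) ↦ U + (v, w)`.
Conversely, in a swap either one root lies in the other tree, hence is reached from the other
root by a directed path, or both roots have a single out-arc and the swap exchanges them above
a common tree: this is an edge of `𝒢`. For `k = 1` all one-arc trees are one swap apart, and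
`𝒢` is connected because `G` is weakly connected.
-/

/-- The vertex set of a set of arcs. -/
def arcVerts {V : Type*} [DecidableEq V] (T : Finset (V × V)) : Finset V :=
  T.image Prod.fst ∪ T.image Prod.snd

/-- The in-degree of a vertex `v` in a set of arcs `T`. -/
def inDeg {V : Type*} [DecidableEq V] (T : Finset (V × V)) (v : V) : ℕ :=
  (T.filter fun e => e.2 = v).card

/-- The step relation of a set of arcs: `arcRel T a b` iff `(a, b)` is an arc of `T`. -/
def arcRel {V : Type*} (T : Finset (V × V)) : V → V → Prop := fun a b => (a, b) ∈ T

/-- `T` is (the arc set of) a directed tree rooted at `r`: the root has in-degree `0`,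
every other vertex has in-degree exactly `1`, and every vertex is reachable from `r`. -/
def IsDirTree {V : Type*} [DecidableEq V] (T : Finset (V × V)) (r : V) : Prop :=
  inDeg T r = 0 ∧ (∀ v ∈ arcVerts T, v ≠ r → inDeg T v = 1) ∧
    ∀ v ∈ arcVerts T, Relation.ReflTransGen (arcRel T) r v

/-- The arc set of the subgraph of `A` induced by all vertices other than `u` and `v`. -/
def inducedAvoid {V : Type*} [DecidableEq V] (A : Finset (V × V)) (u v : V) :
    Finset (V × V) :=
  A.filter fun e => e.1 ≠ u ∧ e.1 ≠ v ∧ e.2 ≠ u ∧ e.2 ≠ v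

/-- `G` contains a `v`-directed tree with `k` arcs. -/
def hasKTree {V : Type*} [DecidableEq V] (A : Finset (V × V)) (k : ℕ) (v : V) : Prop :=
  ∃ T, T ⊆ A ∧ IsDirTree T v ∧ T.card = k

/-- Adjacency in the auxiliary graph `𝒢`: both `u` and `v` are roots of some directed
tree with `k` arcs in `G`, they are distinct, and either `G` has a directed path
between them (in one of the two directions), or they have a common out-neighbor `w`
such that `G[V ∖ {u, v}]` has a `w`-directed tree with `k - 1` arcs. -/
def auxAdj {V : Type*} [DecidableEq V] (A : Finset (V × V)) (k : ℕ) (u v : V) : Prop :=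
  u ≠ v ∧ hasKTree A k u ∧ hasKTree A k v ∧
    ((Relation.ReflTransGen (arcRel A) u v ∨ Relation.ReflTransGen (arcRel A) v u) ∨
      ∃ w, (u, w) ∈ A ∧ (v, w) ∈ A ∧
        ∃ T, T ⊆ inducedAvoid A u v ∧ IsDirTree T w ∧ T.card = k - 1)

open Relation Finset

section

variable {V : Type*}

theorem Relation.ReflTransGen.arcRel_mono {S T : Finset (V × V)} {u v : V} (h : S ⊆ T)
    (hr : ReflTransGen (arcRel S) u v) : ReflTransGen (arcRel T) u v :=
  ReflTransGen.mono (fun _ _ hx => h hx) _ _ hr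

variable [DecidableEq V]

section Arcs

variable {S T : Finset (V × V)} {e : V × V} {a u v : V}

theorem mem_arcVerts : v ∈ arcVerts T ↔ ∃ e ∈ T, e.1 = v ∨ e.2 = v := by
  simp only [arcVerts, mem_union, mem_image]
  grind

theorem fst_mem_arcVerts (he : e ∈ T) : e.1 ∈ arcVerts T :=
  mem_arcVerts.2 ⟨e, he, .inl rfl⟩

theorem snd_mem_arcVerts (he : e ∈ T) : e.2 ∈ arcVerts T :=
  mem_arcVerts.2 ⟨e, he, .inr rfl⟩

theorem arcVerts_mono (h : S ⊆ T) : arcVerts S ⊆ arcVerts T := fun _ hv =>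
  let ⟨e, he, hev⟩ := mem_arcVerts.1 hv
  mem_arcVerts.2 ⟨e, h he, hev⟩

theorem arcVerts_insert : arcVerts (insert e T) = insert e.1 (insert e.2 (arcVerts T)) := by
  ext v
  simp only [mem_arcVerts, mem_insert, exists_eq_or_imp]
  grind

theorem Relation.ReflTransGen.arcRel_erase_or (h : ReflTransGen (arcRel T) a v) :
    ReflTransGen (arcRel (T.erase e)) a v ∨
      ReflTransGen (arcRel (T.erase e)) a e.1 ∧ ReflTransGen (arcRel (T.erase e)) e.2 v := by
  induction h with
  | refl => exact .inl .refl
  | @tail x y _ hxy ih =>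
    by_cases hxye : (x, y) = e
    · subst hxye
      exact .inr ⟨ih.elim id And.left, .refl⟩
    · have hxy' : arcRel (T.erase e) x y := mem_erase.2 ⟨hxye, hxy⟩
      exact ih.imp (·.tail hxy') fun h => ⟨h.1, h.2.tail hxy'⟩

theorem injOn_snd_insert (h : Set.InjOn Prod.snd (T : Set (V × V)))
    (he : ∀ f ∈ T, f.2 ≠ e.2) :
    Set.InjOn Prod.snd ((insert e T : Finset (V × V)) : Set (V × V)) := by
  rw [coe_insert, Set.injOn_insert fun heT => he e heT rfl]
  exact ⟨h, fun ⟨f, hf, hfe⟩ => he f hf hfe⟩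

theorem subset_inducedAvoid_iff {A : Finset (V × V)} :
    T ⊆ inducedAvoid A u v ↔ T ⊆ A ∧ u ∉ arcVerts T ∧ v ∉ arcVerts T := by
  simp only [subset_iff, inducedAvoid, mem_filter, mem_arcVerts]
  grind

end Arcs

/-- The vertex set of an `r`-directed tree `T`; it contains `r` even when `T` has no arcs. -/
def treeVerts (T : Finset (V × V)) (r : V) : Finset V :=
  insert r (T.image Prod.snd)

theorem mem_treeVerts {T : Finset (V × V)} {r v : V} :
    v ∈ treeVerts T r ↔ v = r ∨ ∃ e ∈ T, e.2 = v := by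
  simp [treeVerts]

theorem treeVerts_mono {S T : Finset (V × V)} (h : S ⊆ T) (r : V) :
    treeVerts S r ⊆ treeVerts T r :=
  insert_subset_insert r (image_subset_image h)

theorem isDirTree_iff {T : Finset (V × V)} {r : V} :
    IsDirTree T r ↔ (∀ e ∈ T, e.2 ≠ r) ∧ Set.InjOn Prod.snd (T : Set (V × V)) ∧
      ∀ v ∈ arcVerts T, ReflTransGen (arcRel T) r v := by
  have hdeg (v : V) :
      inDeg T v = 1 ↔ ∃ e ∈ T, e.2 = v ∧ ∀ f ∈ T, f.2 = v → f = e := by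
    simp only [inDeg, card_eq_one, eq_singleton_iff_unique_mem, mem_filter, and_imp, and_assoc]
  simp only [IsDirTree, inDeg, card_eq_zero, filter_eq_empty_iff]
  refine ⟨fun ⟨hr, hdeg1, hreach⟩ => ⟨hr, fun e he f hf hef => ?_, hreach⟩,
    fun ⟨hr, hinj, hreach⟩ => ⟨hr, fun v hv hvr => (hdeg v).2 ?_, hreach⟩⟩
  · obtain ⟨g, -, -, hg⟩ := (hdeg e.2).1 (hdeg1 e.2 (snd_mem_arcVerts he) (hr he))
    exact (hg e he rfl).trans (hg f hf hef.symm).symm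
  · obtain rfl | ⟨c, -, hcv⟩ := (hreach v hv).cases_tail
    · exact absurd rfl hvr
    · exact ⟨(c, v), hcv, rfl, fun f hf hfv => hinj hf hcv hfv⟩

theorem isDirTree_empty (r : V) : IsDirTree (∅ : Finset (V × V)) r :=
  isDirTree_iff.2 ⟨by simp, by simp, by simp [arcVerts]⟩

namespace IsDirTree

variable {T : Finset (V × V)} {r : V} {e : V × V}

theorem snd_ne (hT : IsDirTree T r) (he : e ∈ T) : e.2 ≠ r :=
  (isDirTree_iff.1 hT).1 e he

theorem injOn_snd (hT : IsDirTree T r) : Set.InjOn Prod.snd (T : Set (V × V)) :=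
  (isDirTree_iff.1 hT).2.1

theorem reach (hT : IsDirTree T r) {v : V} (hv : v ∈ arcVerts T) :
    ReflTransGen (arcRel T) r v :=
  hT.2.2 v hv

theorem injOn_snd_erase (hT : IsDirTree T r) (e : V × V) :
    Set.InjOn Prod.snd ((T.erase e : Finset (V × V)) : Set (V × V)) :=
  hT.injOn_snd.mono (coe_subset.2 (erase_subset e T))

theorem reach_erase_or (hT : IsDirTree T r) {v : V} (hv : v ∈ arcVerts (T.erase e)) :
    ReflTransGen (arcRel (T.erase e)) r v ∨ ReflTransGen (arcRel (T.erase e)) e.2 v :=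
  ((hT.reach (arcVerts_mono (erase_subset e T) hv)).arcRel_erase_or).imp_right And.right

theorem exists_root_arc (hT : IsDirTree T r) (hne : T.Nonempty) : ∃ w, (r, w) ∈ T := by
  obtain ⟨e, he⟩ := hne
  obtain heq | ⟨w, hw, -⟩ := (hT.reach (fst_mem_arcVerts he)).cases_head
  · exact ⟨e.2, by rwa [heq]⟩
  · exact ⟨w, hw⟩

theorem root_mem_arcVerts (hT : IsDirTree T r) (hne : T.Nonempty) : r ∈ arcVerts T :=
  let ⟨_, hw⟩ := hT.exists_root_arc hne
  fst_mem_arcVerts hw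

theorem root_unique {r' : V} (hT : IsDirTree T r) (hT' : IsDirTree T r') (hne : T.Nonempty) :
    r = r' := by
  obtain heq | ⟨c, -, hcr⟩ := (hT'.reach (hT.root_mem_arcVerts hne)).cases_tail
  · exact heq
  · exact absurd rfl (hT.snd_ne hcr)

theorem arcVerts_subset_treeVerts (hT : IsDirTree T r) : arcVerts T ⊆ treeVerts T r := by
  intro v hv
  obtain rfl | ⟨c, -, hcv⟩ := (hT.reach hv).cases_tail
  · exact mem_insert_self _ _
  · exact mem_treeVerts.2 (.inr ⟨(c, v), hcv, rfl⟩)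

theorem snd_ne_of_mem_erase (hT : IsDirTree T r) (he : e ∈ T) {f : V × V}
    (hf : f ∈ T.erase e) : f.2 ≠ e.2 :=
  fun hfe => ne_of_mem_erase hf (hT.injOn_snd (mem_of_mem_erase hf) he hfe)

theorem not_reach_erase (hT : IsDirTree T r) (he : e ∈ T) :
    ¬ReflTransGen (arcRel (T.erase e)) r e.2 := by
  intro h
  obtain heq | ⟨c, -, hc⟩ := h.cases_tail
  · exact hT.snd_ne he heq
  · exact hT.snd_ne_of_mem_erase he hc rfl

theorem fst_ne_snd (hT : IsDirTree T r) (he : e ∈ T) : e.1 ≠ e.2 := by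
  intro hloop
  have := hT.not_reach_erase he
  rcases (hT.reach (fst_mem_arcVerts he)).arcRel_erase_or (e := e) with h | h
  · exact this (hloop ▸ h)
  · exact this (hloop ▸ h.1)

theorem fst_mem_treeVerts_erase (hT : IsDirTree T r) (he : e ∈ T) :
    e.1 ∈ treeVerts (T.erase e) r := by
  obtain h | ⟨f, hf, hfe⟩ :=
    mem_treeVerts.1 (hT.arcVerts_subset_treeVerts (fst_mem_arcVerts he))
  · exact mem_treeVerts.2 (.inl h)
  · refine mem_treeVerts.2 (.inr ⟨f, mem_erase.2 ⟨?_, hf⟩, hfe⟩)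
    rintro rfl
    exact hT.fst_ne_snd hf hfe.symm

theorem snd_notMem_treeVerts_erase (hT : IsDirTree T r) (he : e ∈ T) :
    e.2 ∉ treeVerts (T.erase e) r := by
  rw [mem_treeVerts, not_or]
  exact ⟨hT.snd_ne he, fun ⟨f, hf, hfe⟩ => hT.snd_ne_of_mem_erase he hf hfe⟩

-- The `#T + 1` vertices of `T` cannot all be tails of its `#T` arcs.
theorem exists_leaf (hT : IsDirTree T r) (hne : T.Nonempty) :
    ∃ e ∈ T, ∀ f ∈ T, f.1 ≠ e.2 := by
  by_contra! h
  have hsub : treeVerts T r ⊆ T.image Prod.fst := by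
    intro v hv
    obtain rfl | ⟨e, he, rfl⟩ := mem_treeVerts.1 hv
    · exact mem_image_of_mem _ (hT.exists_root_arc hne).choose_spec
    · obtain ⟨f, hf, hfe⟩ := h e he
      exact mem_image.2 ⟨f, hf, hfe⟩
  have hr : r ∉ T.image Prod.snd := fun h => by
    obtain ⟨e, he, her⟩ := mem_image.1 h
    exact hT.snd_ne he her
  have := card_le_card hsub
  rw [treeVerts, card_insert_of_notMem hr, card_image_of_injOn hT.injOn_snd] at this
  exact absurd (this.trans card_image_le) (by omega)

theorem insert_leaf (hT : IsDirTree T r) (he1 : e.1 ∈ treeVerts T r)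
    (he2 : e.2 ∉ treeVerts T r) : IsDirTree (insert e T) r := by
  have he2r : e.2 ≠ r := fun h => he2 (mem_treeVerts.2 (.inl h))
  have he2T : ∀ f ∈ T, f.2 ≠ e.2 :=
    fun f hf hfe => he2 (mem_treeVerts.2 (.inr ⟨f, hf, hfe⟩))
  have hreach1 : ReflTransGen (arcRel (insert e T)) r e.1 := by
    obtain h | ⟨f, hf, hfe⟩ := mem_treeVerts.1 he1
    · exact h ▸ .refl
    · exact hfe ▸ (hT.reach (snd_mem_arcVerts hf)).arcRel_mono (subset_insert _ _)
  refine isDirTree_iff.2 ⟨?_, injOn_snd_insert hT.injOn_snd he2T, ?_⟩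
  · exact (forall_mem_insert _ _ _).2 ⟨he2r, fun f hf => hT.snd_ne hf⟩
  · simp only [arcVerts_insert, mem_insert]
    rintro v (rfl | rfl | hv)
    · exact hreach1
    · exact hreach1.tail (mem_insert_self e T)
    · exact (hT.reach hv).arcRel_mono (subset_insert _ _)

theorem insert_root {u : V} (hT : IsDirTree T r) (hu : u ∉ arcVerts T) (hur : u ≠ r) :
    IsDirTree (insert (u, r) T) u := by
  have hur' : ReflTransGen (arcRel (insert (u, r) T)) u r := .single (mem_insert_self _ _)
  refine isDirTree_iff.2 ⟨?_, injOn_snd_insert hT.injOn_snd fun f hf => hT.snd_ne hf, ?_⟩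
  · exact (forall_mem_insert _ _ _).2
      ⟨hur.symm, fun f hf hfu => hu (hfu ▸ snd_mem_arcVerts hf)⟩
  · simp only [arcVerts_insert, mem_insert]
    rintro v (rfl | rfl | hv)
    · exact .refl
    · exact hur'
    · exact hur'.trans ((hT.reach hv).arcRel_mono (subset_insert _ _))

theorem erase_leaf (hT : IsDirTree T r) (he : e ∈ T) (hleaf : ∀ f ∈ T, f.1 ≠ e.2) :
    IsDirTree (T.erase e) r := by
  refine isDirTree_iff.2 ⟨fun f hf => hT.snd_ne (mem_of_mem_erase hf), hT.injOn_snd_erase e,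
    fun v hv => ?_⟩
  rcases hT.reach_erase_or hv with h | h
  · exact h
  · exfalso
    obtain rfl | ⟨w, hw, -⟩ := h.cases_head
    · obtain ⟨f, hf, hfv | hfv⟩ := mem_arcVerts.1 hv
      · exact hleaf f (mem_of_mem_erase hf) hfv
      · exact hT.snd_ne_of_mem_erase he hf hfv
    · exact hleaf _ (mem_of_mem_erase hw) rfl

theorem fst_eq_of_root_notMem_arcVerts_erase (hT : IsDirTree T r) (he : e ∈ T)
    (hr : r ∉ arcVerts (T.erase e)) : e.1 = r := by
  obtain ⟨w, hw⟩ := hT.exists_root_arc ⟨e, he⟩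
  by_contra hne
  exact hr (fst_mem_arcVerts (mem_erase.2 ⟨by rintro rfl; exact hne rfl, hw⟩))

theorem erase_root_arc (hT : IsDirTree T r) (he : e ∈ T) (hr : r ∉ arcVerts (T.erase e)) :
    IsDirTree (T.erase e) e.2 := by
  refine isDirTree_iff.2 ⟨fun f hf => hT.snd_ne_of_mem_erase he hf, hT.injOn_snd_erase e,
    fun v hv => ?_⟩
  rcases hT.reach_erase_or hv with h | h
  · exfalso
    obtain rfl | ⟨w, hw, -⟩ := h.cases_head
    · exact hr hv
    · exact hr (fst_mem_arcVerts hw)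
  · exact h

theorem reroot (hT : IsDirTree T r) (he : e ∈ T) :
    IsDirTree (insert (e.2, r) (T.erase e)) e.2 := by
  have hreach : ReflTransGen (arcRel (insert (e.2, r) (T.erase e))) e.2 r :=
    .single (mem_insert_self _ _)
  refine isDirTree_iff.2 ⟨(forall_mem_insert _ _ _).2 ⟨(hT.snd_ne he).symm,
    fun f hf => hT.snd_ne_of_mem_erase he hf⟩,
    injOn_snd_insert (hT.injOn_snd_erase e) fun f hf => hT.snd_ne (mem_of_mem_erase hf), ?_⟩
  simp only [arcVerts_insert, mem_insert]
  rintro v (rfl | rfl | hv)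
  · exact .refl
  · exact hreach
  · rcases hT.reach_erase_or hv with h | h
    · exact hreach.trans (h.arcRel_mono (subset_insert _ _))
    · exact h.arcRel_mono (subset_insert _ _)

end IsDirTree

def IsArcSwap (T T' : Finset (V × V)) : Prop :=
  ∃ a ∈ T, ∃ b ∉ T, T' = insert b (T.erase a)

theorem isArcSwap_iff_card_sdiff {T T' : Finset (V × V)} :
    IsArcSwap T T' ↔ (T \ T').card = 1 ∧ (T' \ T).card = 1 := by
  constructor
  · rintro ⟨a, ha, b, hb, rfl⟩
    rw [card_eq_one, card_eq_one]
    refine ⟨⟨a, ?_⟩, ⟨b, ?_⟩⟩ <;>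
    · ext x
      simp only [mem_sdiff, mem_insert, mem_erase, mem_singleton]
      grind
  · rintro ⟨h, h'⟩
    obtain ⟨a, ha⟩ := card_eq_one.1 h
    obtain ⟨b, hb⟩ := card_eq_one.1 h'
    have haT : a ∈ T := (mem_sdiff.1 (ha ▸ mem_singleton_self a)).1
    have hbT : b ∉ T := (mem_sdiff.1 (hb ▸ mem_singleton_self b)).2
    refine ⟨a, haT, b, hbT, ?_⟩
    ext x
    simp only [Finset.ext_iff, mem_sdiff, mem_insert, mem_erase, mem_singleton] at ha hb ⊢
    grind

theorem IsArcSwap.symm {T T' : Finset (V × V)} (h : IsArcSwap T T') : IsArcSwap T' T :=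
  isArcSwap_iff_card_sdiff.2 (isArcSwap_iff_card_sdiff.1 h).symm

theorem eq_or_isArcSwap_of_card_sdiff_le_one {T T' : Finset (V × V)} (hcard : T.card = T'.card)
    (h : (T \ T').card ≤ 1) : T = T' ∨ IsArcSwap T T' := by
  have hcomm := card_sdiff_comm hcard
  obtain h0 | h1 : (T \ T').card = 0 ∨ (T \ T').card = 1 := by omega
  · exact .inl (eq_of_subset_of_card_le (sdiff_eq_empty_iff_subset.1 (card_eq_zero.1 h0))
      hcard.ge)
  · exact .inr (isArcSwap_iff_card_sdiff.2 ⟨h1, hcomm ▸ h1⟩)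

section Reconfiguration

variable {A : Finset (V × V)} {k j : ℕ} {r : V} {T T' W W' U : Finset (V × V)}

-- `hasKTree A k r` unfolds to `∃ T, IsKTree A k r T`.
def IsKTree (A : Finset (V × V)) (k : ℕ) (r : V) (T : Finset (V × V)) : Prop :=
  T ⊆ A ∧ IsDirTree T r ∧ T.card = k

def ReconfAt (A : Finset (V × V)) (k : ℕ) (r : V) (T T' : Finset (V × V)) : Prop :=
  IsKTree A k r T ∧ IsKTree A k r T' ∧ IsArcSwap T T'

def Reconf (A : Finset (V × V)) (k : ℕ) (T T' : Finset (V × V)) : Prop :=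
  (∃ r, IsKTree A k r T) ∧ (∃ r, IsKTree A k r T') ∧ IsArcSwap T T'

theorem ReconfAt.reconf (h : ReconfAt A k r T T') : Reconf A k T T' :=
  ⟨⟨r, h.1⟩, ⟨r, h.2.1⟩, h.2.2⟩

theorem Reconf.symm (h : Reconf A k T T') : Reconf A k T' T :=
  ⟨h.2.1, h.1, h.2.2.symm⟩

theorem Relation.ReflTransGen.reconf_symm (h : ReflTransGen (Reconf A k) T T') :
    ReflTransGen (Reconf A k) T' T :=
  ReflTransGen.mono (fun _ _ h => h.symm) _ _ h.swap

theorem IsKTree.insert_erase {a b : V × V} {r' : V} (hT : IsKTree A k r T) (ha : a ∈ T)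
    (hb : b ∉ T) (hbA : b ∈ A) (hT' : IsDirTree (insert b (T.erase a)) r') :
    IsKTree A k r' (insert b (T.erase a)) := by
  refine ⟨insert_subset hbA ((erase_subset a T).trans hT.1), hT', ?_⟩
  rw [card_insert_of_notMem fun h => hb (mem_of_mem_erase h), card_erase_add_one ha, hT.2.2]

theorem IsKTree.exists_erase_leaf (hT : IsKTree A (j + 1) r T) :
    ∃ e, IsKTree A j r (T.erase e) := by
  obtain ⟨e, he, hleaf⟩ := hT.2.1.exists_leaf (card_pos.1 (by rw [hT.2.2]; omega))
  refine ⟨e, (erase_subset e T).trans hT.1, hT.2.1.erase_leaf he hleaf, ?_⟩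
  rw [card_erase_of_mem he, hT.2.2, Nat.add_sub_cancel]

-- `b` takes over the head of `a`, so `a.2 = b.2`.
theorem IsDirTree.treeVerts_insert_erase {a b : V × V}
    (hW' : IsDirTree (insert b (W.erase a)) r) (ha : a ∈ W) (hb : b ∉ W)
    (hb2 : b.2 ∈ treeVerts W r) : treeVerts (insert b (W.erase a)) r = treeVerts W r := by
  have hab : a.2 = b.2 := by
    obtain h | ⟨f, hf, hfb⟩ := mem_treeVerts.1 hb2
    · exact absurd h (hW'.snd_ne (mem_insert_self _ _))
    · by_contra hne
      have hfa : f ≠ a := by rintro rfl; exact hne hfb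
      have hfW' : f ∈ insert b (W.erase a) := mem_insert_of_mem (mem_erase.2 ⟨hfa, hf⟩)
      exact hb (hW'.injOn_snd hfW' (mem_insert_self b _) hfb ▸ hf)
  conv_rhs => rw [← insert_erase ha]
  simp only [treeVerts, image_insert, hab]

/-- Here `T = insert c W` with `c` a leaf arc. If the head of `b` is already a vertex of `W`,
keep the leaf: `T' = insert c W'`; otherwise replace it by `b`: `T' = insert b W`. -/
theorem ReconfAt.exists_lift (hstep : ReconfAt A j r W W') (hT : IsKTree A (j + 1) r T)
    (hWT : W ⊆ T) :
    ∃ T', IsKTree A (j + 1) r T' ∧ W' ⊆ T' ∧ ReflGen (ReconfAt A (j + 1) r) T T' := by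
  obtain ⟨⟨-, hW, hWc⟩, ⟨hW'A, hW', -⟩, a, ha, b, hb, rfl⟩ := hstep
  obtain ⟨c, hc, rfl⟩ : ∃ c ∉ W, insert c W = T :=
    exists_eq_insert_iff.2 ⟨hWT, by rw [hWc, hT.2.2]⟩
  have hbW : b ∉ W.erase a := fun h => hb (mem_of_mem_erase h)
  have hc1 : c.1 ∈ treeVerts W r := by
    simpa [erase_insert hc] using hT.2.1.fst_mem_treeVerts_erase (mem_insert_self c W)
  have hc2 : c.2 ∉ treeVerts W r := by
    simpa [erase_insert hc] using hT.2.1.snd_notMem_treeVerts_erase (mem_insert_self c W)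
  have hb1 : b.1 ∈ treeVerts W r := treeVerts_mono (erase_subset a W) r
    (by simpa [erase_insert hbW] using hW'.fst_mem_treeVerts_erase (mem_insert_self b _))
  have hbA : b ∈ A := hW'A (mem_insert_self b _)
  by_cases hcb : c = b
  · subst hcb
    exact ⟨insert c W, hT, insert_subset_insert c (erase_subset a W), .refl⟩
  have hbT : b ∉ insert c W := by
    rw [mem_insert, not_or]
    exact ⟨Ne.symm hcb, hb⟩
  by_cases hb2 : b.2 ∈ treeVerts W r
  · have hac : c ≠ a := by rintro rfl; exact hc ha
    have hvert := hW'.treeVerts_insert_erase ha hb hb2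
    have heq : insert b ((insert c W).erase a) = insert c (insert b (W.erase a)) := by
      rw [erase_insert_of_ne hac, insert_comm]
    have hK := hT.insert_erase (mem_insert_of_mem ha) hbT hbA
      (heq ▸ hW'.insert_leaf (hvert ▸ hc1) (hvert ▸ hc2))
    exact ⟨_, hK, heq ▸ subset_insert _ _,
      .single ⟨hT, hK, a, mem_insert_of_mem ha, b, hbT, rfl⟩⟩
  · have heq : insert b ((insert c W).erase c) = insert b W := by rw [erase_insert hc]
    have hK := hT.insert_erase (mem_insert_self c W) hbT hbA
      (heq ▸ hW.insert_leaf hb1 hb2)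
    exact ⟨_, hK, heq ▸ insert_subset_insert b (erase_subset a W),
      .single ⟨hT, hK, c, mem_insert_self c W, b, hbT, rfl⟩⟩

theorem Relation.ReflTransGen.exists_lift (hchain : ReflTransGen (ReconfAt A j r) W U)
    (hT : IsKTree A (j + 1) r T) (hWT : W ⊆ T) :
    ∃ T', IsKTree A (j + 1) r T' ∧ U ⊆ T' ∧ ReflTransGen (ReconfAt A (j + 1) r) T T' := by
  induction hchain using ReflTransGen.head_induction_on generalizing T with
  | refl => exact ⟨T, hT, hWT, .refl⟩
  | head hstep _ ih =>
    obtain ⟨T₁, hT₁, hsub, h₁⟩ := hstep.exists_lift hT hWT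
    obtain ⟨T', hT', hU, h'⟩ := ih hT₁ hsub
    exact ⟨T', hT', hU, h₁.to_reflTransGen.trans h'⟩

-- Strip a leaf from each tree, connect the remainders by induction and lift that sequence.
theorem IsKTree.reflTransGen_reconfAt (hT : IsKTree A j r T) (hT' : IsKTree A j r T') :
    ReflTransGen (ReconfAt A j r) T T' := by
  induction j generalizing T T' with
  | zero => rw [card_eq_zero.1 hT.2.2, card_eq_zero.1 hT'.2.2]
  | succ j ih =>
    obtain ⟨e, hTe⟩ := hT.exists_erase_leaf
    obtain ⟨f, hT'f⟩ := hT'.exists_erase_leaf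
    obtain ⟨T₂, hT₂, hsub, hchain⟩ := (ih hTe hT'f).exists_lift hT (erase_subset e T)
    have hdiff : (T₂ \ T').card ≤ 1 := calc
      (T₂ \ T').card ≤ (T₂ \ T'.erase f).card :=
        card_le_card (sdiff_subset_sdiff subset_rfl (erase_subset f T'))
      _ = 1 := by rw [card_sdiff_of_subset hsub, hT₂.2.2, hT'f.2.2]; omega
    rcases eq_or_isArcSwap_of_card_sdiff_le_one (hT₂.2.2.trans hT'.2.2.symm) hdiff with rfl | h
    · exact hchain
    · exact hchain.tail ⟨hT₂, hT', h⟩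

theorem IsKTree.reflTransGen_reconf (hT : IsKTree A k r T) (hT' : IsKTree A k r T') :
    ReflTransGen (Reconf A k) T T' :=
  ReflTransGen.mono (fun _ _ h => h.reconf) _ _ (hT.reflTransGen_reconfAt hT')

end Reconfiguration

section Forward

variable {A : Finset (V × V)} {k : ℕ} {T : Finset (V × V)} {u v : V}

-- Add `(u, m)` and drop the in-arc of `u` if `u` is already a vertex, or else a leaf arc.
theorem IsKTree.exists_reconf_of_arc {m : V} (hT : IsKTree A k m T) (hk : 0 < k)
    (hum : (u, m) ∈ A) (hne : u ≠ m) : ∃ T', IsKTree A k u T' ∧ Reconf A k T T' := by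
  have humT : (u, m) ∉ T := fun h => hT.2.1.snd_ne h rfl
  obtain ⟨e, he, htree⟩ : ∃ e ∈ T, IsDirTree (insert (u, m) (T.erase e)) u := by
    by_cases hu : u ∈ arcVerts T
    · obtain h | ⟨e, he, rfl⟩ := mem_treeVerts.1 (hT.2.1.arcVerts_subset_treeVerts hu)
      · exact absurd h hne
      · exact ⟨e, he, hT.2.1.reroot he⟩
    · obtain ⟨e, he, hleaf⟩ := hT.2.1.exists_leaf (card_pos.1 (hT.2.2 ▸ hk))
      exact ⟨e, he, (hT.2.1.erase_leaf he hleaf).insert_root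
        (fun h => hu (arcVerts_mono (erase_subset e T) h)) hne⟩
  have hK := hT.insert_erase he humT hum htree
  exact ⟨_, hK, ⟨m, hT⟩, ⟨u, hK⟩, e, he, (u, m), humT, rfl⟩

theorem IsKTree.exists_reconf_of_reach (hT : IsKTree A k v T) (hk : 0 < k)
    (hpath : ReflTransGen (arcRel A) u v) :
    ∃ T', IsKTree A k u T' ∧ ReflTransGen (Reconf A k) T T' := by
  induction hpath using ReflTransGen.head_induction_on with
  | refl => exact ⟨T, hT, .refl⟩
  | @head x y hxy _ ih =>
    obtain ⟨Ty, hTy, hchain⟩ := ih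
    by_cases hxy' : x = y
    · exact ⟨Ty, hxy' ▸ hTy, hchain⟩
    · obtain ⟨Tx, hTx, hstep⟩ := hTy.exists_reconf_of_arc hk hxy hxy'
      exact ⟨Tx, hTx, hchain.tail hstep⟩

theorem IsKTree.exists_reconf_of_auxAdj (hT : IsKTree A k u T) (hk : 0 < k)
    (h : auxAdj A k u v) : ∃ T', IsKTree A k v T' ∧ ReflTransGen (Reconf A k) T T' := by
  obtain ⟨huv, -, ⟨Tv, hTv⟩, hcases⟩ := h
  change IsKTree A k v Tv at hTv
  rcases hcases with (hpath | hpath) | ⟨w, huw, hvw, Tw, hTwsub, hTw, hTwc⟩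
  · obtain ⟨T', hT', hchain⟩ := hTv.exists_reconf_of_reach hk hpath
    exact ⟨Tv, hTv, (hT.reflTransGen_reconf hT').trans hchain.reconf_symm⟩
  · exact hT.exists_reconf_of_reach hk hpath
  obtain rfl | hk2 : k = 1 ∨ 2 ≤ k := by omega
  · refine ⟨Tv, hTv, ?_⟩
    rcases eq_or_isArcSwap_of_card_sdiff_le_one (hT.2.2.trans hTv.2.2.symm)
      ((card_le_card sdiff_subset).trans hT.2.2.le) with rfl | h
    · exact .refl
    · exact .single ⟨⟨u, hT⟩, ⟨v, hTv⟩, h⟩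
  -- both `u` and `v` become the new root above the common `w`-tree `Tw`
  obtain ⟨hTwA, hu, hv⟩ := subset_inducedAvoid_iff.1 hTwsub
  have hw := hTw.root_mem_arcVerts (card_pos.1 (by omega))
  have huwT : (u, w) ∉ Tw := fun h => hu (fst_mem_arcVerts h)
  have hvwT : (v, w) ∉ Tw := fun h => hv (fst_mem_arcVerts h)
  have hKu : IsKTree A k u (insert (u, w) Tw) :=
    ⟨insert_subset huw hTwA, hTw.insert_root hu (by rintro rfl; exact hu hw),
      by rw [card_insert_of_notMem huwT, hTwc]; omega⟩
  have hKv : IsKTree A k v (insert (v, w) Tw) :=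
    ⟨insert_subset hvw hTwA, hTw.insert_root hv (by rintro rfl; exact hv hw),
      by rw [card_insert_of_notMem hvwT, hTwc]; omega⟩
  have hswap : IsArcSwap (insert (u, w) Tw) (insert (v, w) Tw) := by
    refine ⟨(u, w), mem_insert_self _ _, (v, w), ?_, by rw [erase_insert huwT]⟩
    simpa [Ne.symm huv] using hvwT
  exact ⟨_, hKv, (hT.reflTransGen_reconf hKu).tail ⟨⟨u, hKu⟩, ⟨v, hKv⟩, hswap⟩⟩

theorem IsKTree.exists_reconf_of_reflTransGen_auxAdj (hT : IsKTree A k u T) (hk : 0 < k)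
    (h : ReflTransGen (auxAdj A k) u v) :
    ∃ T', IsKTree A k v T' ∧ ReflTransGen (Reconf A k) T T' := by
  induction h with
  | refl => exact ⟨T, hT, .refl⟩
  | tail _ hadj ih =>
    obtain ⟨T₁, hT₁, h₁⟩ := ih
    obtain ⟨T', hT', h'⟩ := hT₁.exists_reconf_of_auxAdj hk hadj
    exact ⟨T', hT', h₁.trans h'⟩

end Forward

section Backward

variable {A : Finset (V × V)} {k : ℕ} {T T' : Finset (V × V)} {ρ ρ' : V}

theorem hasKTree_one_of_arc {t c : V} (h : (t, c) ∈ A) (hne : t ≠ c) : hasKTree A 1 t :=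
  ⟨{(t, c)}, singleton_subset_iff.2 h,
    by simpa using (isDirTree_empty c).insert_root (by simp [arcVerts]) hne, card_singleton _⟩

theorem reflTransGen_auxAdj_one_of_reflGen {t t' z : V} (ht : hasKTree A 1 t)
    (ht' : hasKTree A 1 t') (hz : ReflGen (arcRel A) t z) (hz' : ReflGen (arcRel A) t' z) :
    ReflTransGen (auxAdj A 1) t t' := by
  by_cases htt' : t = t'
  · exact htt' ▸ .refl
  refine .single ⟨htt', ht, ht', ?_⟩
  rcases hz with _ | hz <;> rcases hz' with _ | hz'
  · exact absurd rfl htt'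
  · exact .inl (.inr (.single hz'))
  · exact .inl (.inl (.single hz))
  · exact .inr ⟨z, hz, hz', ∅, empty_subset _, isDirTree_empty z, rfl⟩

theorem reflTransGen_auxAdj_one
    (hconn : ∀ a b : V, ReflTransGen (fun x y => (x, y) ∈ A ∨ (y, x) ∈ A) a b) {a b : V}
    (ha : hasKTree A 1 a) (hb : hasKTree A 1 b) : ReflTransGen (auxAdj A 1) a b := by
  -- along a walk from `a`, the current vertex is at most one arc away from a root joined to `a`
  have key (z : V) :
      ∃ t, hasKTree A 1 t ∧ ReflGen (arcRel A) t z ∧ ReflTransGen (auxAdj A 1) a t := by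
    induction hconn a z with
    | refl => exact ⟨a, ha, .refl, .refl⟩
    | @tail y z _ hyz ih =>
      obtain ⟨t, ht, hty, hat⟩ := ih
      by_cases heq : y = z
      · exact heq ▸ ⟨t, ht, hty, hat⟩
      rcases hyz with hyz | hzy
      · have hy := hasKTree_one_of_arc hyz heq
        exact ⟨y, hy, .single hyz,
          hat.trans (reflTransGen_auxAdj_one_of_reflGen ht hy hty .refl)⟩
      · have hz := hasKTree_one_of_arc hzy (Ne.symm heq)
        exact ⟨z, hz, .refl,
          hat.trans (reflTransGen_auxAdj_one_of_reflGen ht hz hty (.single hzy))⟩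
  obtain ⟨t, ht, htb, hat⟩ := key b
  exact hat.trans (reflTransGen_auxAdj_one_of_reflGen ht hb htb .refl)

/-- Each root lies in its own tree only, so its out-arcs there are the swapped arcs; removing
them leaves one common tree, rooted at both heads. -/
theorem IsDirTree.exists_common_out_of_isArcSwap (hT : IsDirTree T ρ) (hT' : IsDirTree T' ρ')
    (hswap : IsArcSwap T T') (hcard : 2 ≤ T.card) (hρ : ρ ∉ arcVerts T')
    (hρ' : ρ' ∉ arcVerts T) :
    ∃ w, (ρ, w) ∈ T ∧ (ρ', w) ∈ T' ∧
      IsDirTree (T.erase (ρ, w)) w ∧ T.erase (ρ, w) ⊆ T' := by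
  obtain ⟨⟨x, w⟩, hc, ⟨y, w'⟩, hd, rfl⟩ := hswap
  have hdT : (y, w') ∉ T.erase (x, w) := fun h => hd (mem_of_mem_erase h)
  have hρU : ρ ∉ arcVerts (T.erase (x, w)) := fun h => hρ (arcVerts_mono (subset_insert _ _) h)
  have hρ'U : ρ' ∉ arcVerts ((insert (y, w') (T.erase (x, w))).erase (y, w')) := by
    rw [erase_insert hdT]
    exact fun h => hρ' (arcVerts_mono (erase_subset _ _) h)
  obtain rfl : x = ρ := hT.fst_eq_of_root_notMem_arcVerts_erase hc hρU
  obtain rfl : y = ρ' := hT'.fst_eq_of_root_notMem_arcVerts_erase (mem_insert_self _ _) hρ'U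
  have hU := hT.erase_root_arc hc hρU
  have hU' := hT'.erase_root_arc (mem_insert_self _ _) hρ'U
  rw [erase_insert hdT] at hU'
  obtain rfl : w = w' := hU.root_unique hU' (card_pos.1 (by rw [card_erase_of_mem hc]; omega))
  exact ⟨w, hc, mem_insert_self _ _, hU, subset_insert _ _⟩

theorem reflTransGen_auxAdj_of_isArcSwap
    (hconn : ∀ a b : V, ReflTransGen (fun x y => (x, y) ∈ A ∨ (y, x) ∈ A) a b) (hk : 0 < k)
    (hT : IsKTree A k ρ T) (hT' : IsKTree A k ρ' T') (hswap : IsArcSwap T T') :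
    ReflTransGen (auxAdj A k) ρ ρ' := by
  obtain rfl | hk2 : k = 1 ∨ 2 ≤ k := by omega
  · exact reflTransGen_auxAdj_one hconn ⟨T, hT⟩ ⟨T', hT'⟩
  by_cases hρρ' : ρ = ρ'
  · exact hρρ' ▸ .refl
  refine .single ⟨hρρ', ⟨T, hT⟩, ⟨T', hT'⟩, ?_⟩
  by_cases hρ' : ρ' ∈ arcVerts T
  · exact .inl (.inl ((hT.2.1.reach hρ').arcRel_mono hT.1))
  by_cases hρ : ρ ∈ arcVerts T'
  · exact .inl (.inr ((hT'.2.1.reach hρ).arcRel_mono hT'.1))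
  obtain ⟨w, hw, hw', hU, hUT'⟩ :=
    hT.2.1.exists_common_out_of_isArcSwap hT'.2.1 hswap (hT.2.2 ▸ hk2) hρ hρ'
  refine .inr ⟨w, hT.1 hw, hT'.1 hw', T.erase (ρ, w), subset_inducedAvoid_iff.2
    ⟨(erase_subset _ _).trans hT.1, fun h => hρ (arcVerts_mono hUT' h),
      fun h => hρ' (arcVerts_mono (erase_subset _ _) h)⟩, hU, ?_⟩
  rw [card_erase_of_mem hw, hT.2.2]

theorem reflTransGen_auxAdj_of_reflTransGen_reconf
    (hconn : ∀ a b : V, ReflTransGen (fun x y => (x, y) ∈ A ∨ (y, x) ∈ A) a b) (hk : 0 < k)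
    (h : ReflTransGen (Reconf A k) T T') (hT : IsKTree A k ρ T) (hT' : IsKTree A k ρ' T') :
    ReflTransGen (auxAdj A k) ρ ρ' := by
  induction h generalizing ρ' with
  | refl => exact hT.2.1.root_unique hT'.2.1 (card_pos.1 (hT.2.2 ▸ hk)) ▸ .refl
  | tail _ hstep ih =>
    obtain ⟨⟨ρm, hTm⟩, -, hswap⟩ := hstep
    exact (ih hTm).trans (reflTransGen_auxAdj_of_isArcSwap hconn hk hTm hT' hswap)

end Backward

theorem Relation.reflTransGen_iff_exists_seq {α : Type*} {R : α → α → Prop} {a b : α} :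
    ReflTransGen R a b ↔
      ∃ ℓ, ∃ f : ℕ → α, f 0 = a ∧ f ℓ = b ∧ ∀ i < ℓ, R (f i) (f (i + 1)) := by
  constructor
  · intro h
    induction h with
    | refl => exact ⟨0, fun _ => a, rfl, rfl, by simp⟩
    | @tail b c _ hbc ih =>
      obtain ⟨ℓ, f, h0, hℓ, hf⟩ := ih
      refine ⟨ℓ + 1, fun i => if i ≤ ℓ then f i else c, by simp [h0], by simp,
        fun i hi => ?_⟩
      rcases Nat.lt_or_ge i ℓ with hi' | hi'
      · simpa [hi'.le, Nat.succ_le_of_lt hi'] using hf i hi'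
      · obtain rfl : i = ℓ := by omega
        simpa [hℓ] using hbc
  · rintro ⟨ℓ, f, rfl, rfl, hf⟩
    suffices ∀ n ≤ ℓ, ReflTransGen R (f 0) (f n) from this ℓ le_rfl
    intro n
    induction n with
    | zero => exact fun _ => .refl
    | succ n ih => exact fun hn => (ih (by omega)).tail (hf n hn)

theorem reflTransGen_reconf_iff {A : Finset (V × V)} {k : ℕ} {Ts Tg : Finset (V × V)}
    (hTs : ∃ r, IsKTree A k r Ts) :
    ReflTransGen (Reconf A k) Ts Tg ↔
      ∃ ℓ, ∃ f : ℕ → Finset (V × V), f 0 = Ts ∧ f ℓ = Tg ∧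
      (∀ i ≤ ℓ, f i ⊆ A ∧ (∃ r, IsDirTree (f i) r) ∧ (f i).card = k) ∧
      (∀ i < ℓ, (f i \ f (i + 1)).card = 1 ∧ (f (i + 1) \ f i).card = 1) := by
  have hgood (T : Finset (V × V)) :
      (∃ r, IsKTree A k r T) ↔ T ⊆ A ∧ (∃ r, IsDirTree T r) ∧ T.card = k :=
    ⟨fun ⟨r, h1, h2, h3⟩ => ⟨h1, ⟨r, h2⟩, h3⟩,
      fun ⟨h1, ⟨r, h2⟩, h3⟩ => ⟨r, h1, h2, h3⟩⟩
  simp only [reflTransGen_iff_exists_seq, ← hgood, ← isArcSwap_iff_card_sdiff]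
  constructor
  · rintro ⟨ℓ, f, h0, hℓ, hf⟩
    refine ⟨ℓ, f, h0, hℓ, fun i hi => ?_, fun i hi => (hf i hi).2.2⟩
    cases i with
    | zero => exact h0 ▸ hTs
    | succ i => exact (hf i hi).2.1
  · rintro ⟨ℓ, f, h0, hℓ, hK, hswap⟩
    exact ⟨ℓ, f, h0, hℓ, fun i hi => ⟨hK i hi.le, hK (i + 1) hi, hswap i hi⟩⟩

end

theorem stmt13_general {V : Type*} [DecidableEq V] (A : Finset (V × V))
    (k : ℕ) (hk : 0 < k)
    (hconn : ∀ a b : V, Relation.ReflTransGen (fun x y => (x, y) ∈ A ∨ (y, x) ∈ A) a b)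
    (Ts Tg : Finset (V × V)) (rs rg : V)
    (hTs : Ts ⊆ A) (hTg : Tg ⊆ A) (hs : IsDirTree Ts rs) (hg : IsDirTree Tg rg)
    (hks : Ts.card = k) (hkg : Tg.card = k) :
    Relation.ReflTransGen (auxAdj A k) rs rg ↔
      ∃ ℓ, ∃ f : ℕ → Finset (V × V), f 0 = Ts ∧ f ℓ = Tg ∧
        (∀ i ≤ ℓ, f i ⊆ A ∧ (∃ r, IsDirTree (f i) r) ∧ (f i).card = k) ∧
        (∀ i < ℓ, (f i \ f (i + 1)).card = 1 ∧ (f (i + 1) \ f i).card = 1) := by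
  have hKs : IsKTree A k rs Ts := ⟨hTs, hs, hks⟩
  have hKg : IsKTree A k rg Tg := ⟨hTg, hg, hkg⟩
  rw [← reflTransGen_reconf_iff ⟨rs, hKs⟩]
  constructor
  · intro h
    obtain ⟨T, hT, hchain⟩ := hKs.exists_reconf_of_reflTransGen_auxAdj hk h
    exact hchain.trans (hT.reflTransGen_reconf hKg)
  · intro h
    exact reflTransGen_auxAdj_of_reflTransGen_reconf hconn hk h hKs hKg

/-- For a weakly connected finite digraph `G` and directed trees `T^s`, `T^g` with `k`
arcs rooted at `r^s`, `r^g`: there is a path between `r^s` and `r^g` in the auxiliary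
graph `𝒢` iff there is a reconfiguration sequence between `T^s` and `T^g` consisting of
directed trees with `k` arcs in `G`. -/
theorem stmt13 {V : Type*} [Fintype V] [DecidableEq V] (A : Finset (V × V))
    (k : ℕ) (hk : 0 < k)
    (hconn : ∀ a b : V, Relation.ReflTransGen (fun x y => (x, y) ∈ A ∨ (y, x) ∈ A) a b)
    (Ts Tg : Finset (V × V)) (rs rg : V)
    (hTs : Ts ⊆ A) (hTg : Tg ⊆ A) (hs : IsDirTree Ts rs) (hg : IsDirTree Tg rg)
    (hks : Ts.card = k) (hkg : Tg.card = k) :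
    Relation.ReflTransGen (auxAdj A k) rs rg ↔
      ∃ ℓ, ∃ f : ℕ → Finset (V × V), f 0 = Ts ∧ f ℓ = Tg ∧
        (∀ i ≤ ℓ, f i ⊆ A ∧ (∃ r, IsDirTree (f i) r) ∧ (f i).card = k) ∧
        (∀ i < ℓ, (f i \ f (i + 1)).card = 1 ∧ (f (i + 1) \ f i).card = 1) :=
  stmt13_general A k hk hconn Ts Tg rs rg hTs hTg hs hg hks hkg
end

section
/- Let P = (v_1, v_2, …, v_k) be a directed path in a finite directed graph G such that (v_k, v_1) is an arc of G (so that P + (v_k, v_1) is a directed cycle), and let 1 < i ≤ k. Then the directed path P' = (v_i, v_{i+1}, …, v_k, v_1, …, v_{i−1}) can be obtained from P by a sliding sequence of length i − 1 in G in which every intermediate subgraph is a directed path in G. -/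
/-! The sliding sequence is `P, rot¹ P, …, rot^(i-1) P`: every rotation of a directed cycle is again
a directed cycle, hence its vertex sequence is a path, and a rotation by one is a single slide
(drop the first vertex, append it at the end). -/

/-- `l` is (the vertex sequence of) a directed path in the digraph with arc set `A`:
a nonempty sequence of distinct vertices with consecutive pairs being arcs. -/
def IsPathIn {V : Type*} (A : Finset (V × V)) (l : List V) : Prop :=
  l ≠ [] ∧ l.Nodup ∧ l.Chain' (fun a b => (a, b) ∈ A)

/-- The arc set of the directed path with vertex sequence `l`. -/
def pathArcs {V : Type*} [DecidableEq V] (l : List V) : Finset (V × V) :=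
  (l.zip l.tail).toFinset

/-- One sliding step between two directed paths `P = (v_1, …, v_k)` and
`P' = (v'_1, …, v'_k)`: either `v_i = v'_{i+1}` for all `1 ≤ i < k`, or
`v_i = v'_{i-1}` for all `1 < i ≤ k`. -/
def SlideStep {V : Type*} (l l' : List V) : Prop :=
  l.length = l'.length ∧ (l'.tail = l.dropLast ∨ l'.dropLast = l.tail)

def IsCycleIn {V : Type*} (A : Finset (V × V)) (l : List V) : Prop :=
  IsPathIn A l ∧ ∀ h : l ≠ [], (l.getLast h, l.head h) ∈ A

namespace IsCycleIn

variable {V : Type*} {A : Finset (V × V)} {l : List V}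

theorem rotate_one (hl : IsCycleIn A l) : IsCycleIn A (l.rotate 1) := by
  match l, hl with
  | [], ⟨⟨hne, _⟩, _⟩ => exact absurd rfl hne
  | [a], hl => simpa using hl
  | a :: b :: t, ⟨⟨_, hnd, hch⟩, hwrap⟩ =>
    have hback : ((b :: t).getLast (List.cons_ne_nil _ _), a) ∈ A := by
      simpa [List.getLast_cons] using hwrap (List.cons_ne_nil _ _)
    refine ⟨⟨by simp, List.nodup_rotate.mpr hnd, ?_⟩, fun _ => ?_⟩
    · simp only [List.rotate_cons_succ, List.rotate_zero]
      exact hch.tail.append (List.isChain_singleton a) fun x hx y hy => by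
        simp_all [List.getLast?_eq_some_getLast]
    · simpa [List.rotate_cons_succ] using (List.isChain_cons_cons.mp hch).1

theorem rotate (hl : IsCycleIn A l) (n : ℕ) : IsCycleIn A (l.rotate n) := by
  induction n with
  | zero => simpa using hl
  | succ n ih => simpa [List.rotate_rotate] using ih.rotate_one

end IsCycleIn

theorem slideStep_rotate_one {V : Type*} (l : List V) : SlideStep l (l.rotate 1) := by
  refine ⟨(List.length_rotate l 1).symm, Or.inr ?_⟩
  cases l <;> simp [List.rotate_cons_succ]

theorem stmt16_general {V : Type*} (A : Finset (V × V))
    (l : List V) (hl : IsPathIn A l)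
    (hcyc : (l.getLast hl.1, l.head hl.1) ∈ A)
    (i : ℕ) :
    ∃ f : ℕ → List V, f 0 = l ∧ f (i - 1) = l.rotate (i - 1) ∧
      (∀ j ≤ i - 1, IsPathIn A (f j)) ∧
      (∀ j < i - 1, SlideStep (f j) (f (j + 1))) := by
  have hcycle : IsCycleIn A l := ⟨hl, fun _ => hcyc⟩
  refine ⟨l.rotate, l.rotate_zero, rfl, fun j _ => (hcycle.rotate j).1, fun j _ => ?_⟩
  simpa [List.rotate_rotate] using slideStep_rotate_one (l.rotate j)

/-- If `P = (v_1, …, v_k)` is a directed path in `G` such that `(v_k, v_1)` is an arc of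
`G`, then for `1 < i ≤ k` the rotated path `P' = (v_i, …, v_k, v_1, …, v_{i-1})` can be
obtained from `P` by a sliding sequence of length `i - 1` all of whose members are
directed paths in `G`. -/
theorem stmt16 {V : Type*} [Fintype V] [DecidableEq V] (A : Finset (V × V))
    (l : List V) (hl : IsPathIn A l)
    (hcyc : (l.getLast hl.1, l.head hl.1) ∈ A)
    (i : ℕ) (hi1 : 1 < i) (hik : i ≤ l.length) :
    ∃ f : ℕ → List V, f 0 = l ∧ f (i - 1) = l.rotate (i - 1) ∧
      (∀ j ≤ i - 1, IsPathIn A (f j)) ∧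
      (∀ j < i - 1, SlideStep (f j) (f (j + 1))) :=
  stmt16_general A l hl hcyc i
end

section
/- Let G = (V, A) be a finite directed graph and let G' = (V', A') be the directed multigraph with V' = ⋃_{v ∈ V} {v^in, v^out}, containing for each v ∈ V the internal arc (v^in, v^out), and for each arc (u, v) ∈ A exactly |V| + 1 parallel arcs from u^out to v^in. For a directed feedback vertex set X of G, let Y(X) denote the set of internal arcs {(v^in, v^out) : v ∈ X}. Then for any two directed feedback vertex sets X^s and X^g of G with |X^s| = |X^g| = k, there is a sequence ⟨X^s = X_0, X_1, …, X_ℓ = X^g⟩ of directed feedback vertex sets of G with |X_i \ X_{i+1}| = |X_{i+1} \ X_i| = 1 for all 0 ≤ i < ℓ if and only if there is a sequence ⟨Y(X^s) = Y_0, Y_1, …, Y_m = Y(X^g)⟩ of directed feedback arc sets of G' with |Y_i \ Y_{i+1}| = |Y_{i+1} \ Y_i| = 1 for all 0 ≤ i < m. -/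
/-- `X` is a directed feedback vertex set of the digraph with arc set `A`: the subgraph
induced by the complement of `X` has no directed cycle. -/
def IsDFVS {V : Type*} [DecidableEq V] (A : Finset (V × V)) (X : Finset V) : Prop :=
  ∀ a b : V, ((a, b) ∈ A ∧ a ∉ X ∧ b ∉ X) →
    ¬ Relation.ReflTransGen (fun x y => (x, y) ∈ A ∧ x ∉ X ∧ y ∉ X) b a

/-- The arcs of the multigraph `G'`: for every vertex `v` of `G` the internal arc
`Sum.inl v` from `v^in` to `v^out`, and for every arc `e` of `G` exactly `|V| + 1`
parallel copies `Sum.inr (e, j)` from `(tail e)^out` to `(head e)^in`. -/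
abbrev GArc (V : Type*) [Fintype V] [DecidableEq V] (A : Finset (V × V)) : Type _ :=
  V ⊕ ({e : V × V // e ∈ A} × Fin (Fintype.card V + 1))

/-- The tail of an arc of `G'`; vertices of `G'` are pairs `(v, b)` with
`v^in = (v, false)` and `v^out = (v, true)`. -/
def arcTail {V : Type*} [Fintype V] [DecidableEq V] {A : Finset (V × V)} :
    GArc V A → V × Bool
  | Sum.inl v => (v, false)
  | Sum.inr (e, _) => (e.val.1, true)

/-- The head of an arc of `G'`. -/
def arcHead {V : Type*} [Fintype V] [DecidableEq V] {A : Finset (V × V)} :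
    GArc V A → V × Bool
  | Sum.inl v => (v, true)
  | Sum.inr (e, _) => (e.val.2, false)

/-- The step relation of `G'` after removing the arc set `Y`. -/
def fasStep {V : Type*} [Fintype V] [DecidableEq V] {A : Finset (V × V)}
    (Y : Finset (GArc V A)) (x y : V × Bool) : Prop :=
  ∃ ar : GArc V A, ar ∉ Y ∧ arcTail ar = x ∧ arcHead ar = y

/-- `Y` is a directed feedback arc set of the multigraph `G'`: removing `Y` from `G'`
leaves no directed cycle. -/
def IsDFAS {V : Type*} [Fintype V] [DecidableEq V] {A : Finset (V × V)}
    (Y : Finset (GArc V A)) : Prop :=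
  ∀ x y, fasStep Y x y → ¬ Relation.ReflTransGen (fasStep Y) y x

/-! A cycle of `G'` avoiding an arc set `Y` alternates internal arcs `v^in → v^out` with copies
of arcs of `G`, so it projects to a cycle of `G` avoiding the vertices whose internal arc lies
in `Y`. Conversely, every such cycle of `G` lifts to `G'` as soon as each arc of `G` keeps a copy
outside `Y`, which is automatic when `|Y| ≤ |V|` because every arc has `|V| + 1` copies.

Swaps preserve cardinality, so along a reconfiguration sequence of feedback arc sets starting at
`Y(X^s)` every set has size `|X^s| ≤ |V|`; the vertex parts of these sets are therefore feedback
vertex sets, and each step adds at most one vertex to them. Shadowing them by supersets `Z` of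
size `|X^s|`, each obtained from the previous one by at most one swap, yields a reconfiguration
sequence of feedback vertex sets, and at the end `X^g ⊆ Z` with `|Z| = |X^g|` forces `Z = X^g`. -/

open Relation Finset

theorem exists_seq_iff_reflTransGen {α : Type*} {r : α → α → Prop} {P : α → Prop} {a b : α} :
    (∃ ℓ, ∃ f : ℕ → α, f 0 = a ∧ f ℓ = b ∧ (∀ i ≤ ℓ, P (f i)) ∧
        ∀ i < ℓ, r (f i) (f (i + 1))) ↔
      P a ∧ ReflTransGen (fun x y => r x y ∧ P y) a b := by
  constructor
  · rintro ⟨ℓ, f, rfl, rfl, hP, hr⟩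
    refine ⟨hP 0 ℓ.zero_le, ?_⟩
    refine (reflTransGen_of_succ_of_le (fun i j => r (f i) (f j) ∧ P (f j)) (fun i hi => ?_)
      ℓ.zero_le).lift f fun _ _ => id
    rw [Order.succ_eq_add_one]
    exact ⟨hr i hi.2, hP (i + 1) hi.2⟩
  · rintro ⟨ha, h⟩
    induction h with
    | refl => exact ⟨0, fun _ => a, rfl, rfl, fun _ _ => ha, nofun⟩
    | @tail c d _ hcd ih =>
      obtain ⟨ℓ, f, hf0, hfℓ, hP, hr⟩ := ih
      refine ⟨ℓ + 1, fun i => if i ≤ ℓ then f i else d, by simpa using hf0, by simp, ?_, ?_⟩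
      · intro i hi
        by_cases h : i ≤ ℓ
        · simpa [h] using hP i h
        · simpa [h] using hcd.2
      · intro i hi
        rcases Nat.lt_succ_iff_lt_or_eq.mp hi with h | rfl
        · simpa [h.le, Nat.succ_le_of_lt h] using hr i h
        · simpa [hfℓ] using hcd.1

section Swap
variable {α β : Type*} [DecidableEq α] [DecidableEq β]

def IsSwap (s t : Finset α) : Prop := #(s \ t) = 1 ∧ #(t \ s) = 1

theorem IsSwap.card_eq {s t : Finset α} (h : IsSwap s t) : #t = #s := by
  have hs := card_sdiff_add_card_inter s t
  have ht := card_sdiff_add_card_inter t s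
  rw [inter_comm, h.2] at ht
  rw [h.1] at hs
  omega

theorem IsSwap.image {s t : Finset α} (h : IsSwap s t) {f : α → β} (hf : Function.Injective f) :
    IsSwap (s.image f) (t.image f) := by
  simpa only [IsSwap, ← image_sdiff _ _ hf, card_image_of_injective _ hf] using h

theorem toLeft_image_inl (s : Finset α) : (s.image (Sum.inl : α → α ⊕ β)).toLeft = s := by
  ext; simp

theorem isSwap_insert_erase {s : Finset α} {a b : α} (ha : a ∈ s) (hb : b ∉ s) :
    IsSwap s (insert b (s.erase a)) := by
  have hab : a ≠ b := by rintro rfl; exact hb ha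
  have h₁ : s \ insert b (s.erase a) = {a} := by
    ext x; simp only [mem_sdiff, mem_insert, mem_erase, mem_singleton]; grind
  have h₂ : insert b (s.erase a) \ s = {b} := by
    ext x; simp only [mem_sdiff, mem_insert, mem_erase, mem_singleton]; grind
  simp [IsSwap, h₁, h₂]

theorem exists_superset_isSwap {s t Z : Finset α} (hsZ : s ⊆ Z) (htZ : #t ≤ #Z)
    (hts : #(t \ s) ≤ 1) : ∃ Z', t ⊆ Z' ∧ (Z' = Z ∨ IsSwap Z Z') := by
  by_cases htZ' : t ⊆ Z
  · exact ⟨Z, htZ', Or.inl rfl⟩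
  obtain ⟨b, hbt, hbZ⟩ := not_subset.mp htZ'
  have hZt : ¬ Z ⊆ t := fun h => htZ' (eq_of_subset_of_card_le h htZ ▸ Subset.rfl)
  obtain ⟨a, haZ, hat⟩ := not_subset.mp hZt
  refine ⟨insert b (Z.erase a), fun x hxt => ?_, Or.inr (isSwap_insert_erase haZ hbZ)⟩
  by_cases hxZ : x ∈ Z
  · exact mem_insert_of_mem (mem_erase.mpr ⟨fun h => hat (h ▸ hxt), hxZ⟩)
  · have hx : x ∈ t \ s := mem_sdiff.mpr ⟨hxt, fun h => hxZ (hsZ h)⟩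
    have hb : b ∈ t \ s := mem_sdiff.mpr ⟨hbt, fun h => hbZ (hsZ h)⟩
    rw [card_le_one.mp hts x hx b hb]
    exact mem_insert_self _ _

end Swap

section InducedSubgraph
variable {V : Type*} [DecidableEq V]

def inducedAdj (A : Finset (V × V)) (X : Finset V) (x y : V) : Prop :=
  (x, y) ∈ A ∧ x ∉ X ∧ y ∉ X

variable {A : Finset (V × V)}

theorem IsDFVS.mono {X X' : Finset V} (hX : IsDFVS A X) (h : X ⊆ X') : IsDFVS A X' :=
  fun a b hab hba => hX a b ⟨hab.1, fun ha => hab.2.1 (h ha), fun hb => hab.2.2 (h hb)⟩ <|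
    ReflTransGen.mono (fun _ _ hxy => ⟨hxy.1, fun hx => hxy.2.1 (h hx), fun hy => hxy.2.2 (h hy)⟩)
      _ _ hba

end InducedSubgraph

section Correspondence
variable {V : Type*} [Fintype V] [DecidableEq V] {A : Finset (V × V)} {Y : Finset (GArc V A)}

theorem fasStep_in_iff {u : V} {q : V × Bool} :
    fasStep Y (u, false) q ↔ u ∉ Y.toLeft ∧ q = (u, true) := by
  constructor
  · rintro ⟨(v | ⟨e, j⟩), hY, htail, rfl⟩ <;> simp_all [arcTail, arcHead]
  · rintro ⟨hY, rfl⟩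
    exact ⟨Sum.inl u, mem_toLeft.not.mp hY, rfl, rfl⟩

theorem fasStep_out_iff {u : V} {q : V × Bool} :
    fasStep Y (u, true) q ↔
      ∃ (h : (u, q.1) ∈ A) (j : Fin (Fintype.card V + 1)),
        Sum.inr (⟨(u, q.1), h⟩, j) ∉ Y ∧ q.2 = false := by
  constructor
  · rintro ⟨(v | ⟨⟨⟨a, b⟩, he⟩, j⟩), hY, htail, rfl⟩
    · simp [arcTail] at htail
    · obtain rfl : a = u := by simpa [arcTail] using htail
      exact ⟨he, j, hY, rfl⟩
  · rintro ⟨h, j, hY, hq⟩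
    obtain ⟨v, b⟩ := q
    simp only at hq h hY
    subst hq
    exact ⟨_, hY, rfl, rfl⟩

theorem reflTransGen_inducedAdj_of_fasStep {a : V} (ha : a ∉ Y.toLeft) {p : V × Bool}
    (h : ReflTransGen (fasStep Y) p (a, false)) :
    (p.2 = false → p.1 ∉ Y.toLeft) ∧
      (p.1 ∉ Y.toLeft → ReflTransGen (inducedAdj A Y.toLeft) p.1 a) := by
  induction h using ReflTransGen.head_induction_on with
  | refl => exact ⟨fun _ => ha, fun _ => .refl⟩
  | @head p q hpq _ ih =>
    obtain ⟨u, _ | _⟩ := p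
    · obtain ⟨hu, rfl⟩ := fasStep_in_iff.mp hpq
      exact ⟨fun _ => hu, fun _ => ih.2 hu⟩
    · obtain ⟨huq, -, -, hq⟩ := fasStep_out_iff.mp hpq
      obtain ⟨hq₁, hq₂⟩ := ih
      have hq₁ := hq₁ hq
      exact ⟨nofun, fun hu => .head ⟨huq, hu, hq₁⟩ (hq₂ hq₁)⟩

theorem not_reflTransGen_fasStep_out_in (hY : IsDFVS A Y.toLeft) {v : V} (hv : v ∉ Y.toLeft) :
    ¬ ReflTransGen (fasStep Y) (v, true) (v, false) := by
  intro h
  obtain ⟨q, hvq, hq⟩ := h.cases_head.resolve_left (by simp)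
  obtain ⟨hvq, -, -, hq₂⟩ := fasStep_out_iff.mp hvq
  obtain ⟨w, _ | _⟩ := q
  · have ⟨hw, hwv⟩ := reflTransGen_inducedAdj_of_fasStep hv hq
    exact hY v w ⟨hvq, hv, hw rfl⟩ (hwv (hw rfl))
  · exact nomatch hq₂

theorem IsDFVS.isDFAS_of_toLeft (hY : IsDFVS A Y.toLeft) : IsDFAS Y := by
  rintro x y ⟨(v | ⟨e, j⟩), harc, rfl, rfl⟩ hyx
  · exact not_reflTransGen_fasStep_out_in hY (mem_toLeft.not.mpr harc) hyx
  · obtain ⟨q, hq, hqx⟩ := hyx.cases_head.resolve_left (by simp [arcTail, arcHead])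
    obtain ⟨hv, rfl⟩ := fasStep_in_iff.mp hq
    exact not_reflTransGen_fasStep_out_in hY hv (hqx.tail ⟨_, harc, rfl, rfl⟩)

theorem reflTransGen_fasStep_of_inducedAdj
    (hY : ∀ e : {e : V × V // e ∈ A}, ∃ j, (Sum.inr (e, j) : GArc V A) ∉ Y) {u w : V}
    (h : ReflTransGen (inducedAdj A Y.toLeft) u w) :
    ReflTransGen (fasStep Y) (u, false) (w, false) := by
  induction h using ReflTransGen.head_induction_on with
  | refl => exact .refl
  | @head x y hxy _ ih =>
    obtain ⟨j, hj⟩ := hY ⟨(x, y), hxy.1⟩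
    exact .head (fasStep_in_iff.mpr ⟨hxy.2.1, rfl⟩)
      (.head (fasStep_out_iff.mpr ⟨hxy.1, j, hj, rfl⟩) ih)

theorem exists_inr_notMem_of_card_le (hY : #Y ≤ Fintype.card V) (e : {e : V × V // e ∈ A}) :
    ∃ j, (Sum.inr (e, j) : GArc V A) ∉ Y := by
  by_contra! h
  have := card_le_card_of_injOn (s := univ) (fun j => (Sum.inr (e, j) : GArc V A))
    (fun j _ => h j) (fun _ _ _ _ hj => by simpa using hj)
  simp only [card_univ, Fintype.card_fin] at this
  omega

theorem IsDFAS.isDFVS_toLeft (hY : IsDFAS Y) (hcard : #Y ≤ Fintype.card V) :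
    IsDFVS A Y.toLeft := by
  rintro a b hab hba
  obtain ⟨j, hj⟩ := exists_inr_notMem_of_card_le hcard ⟨(a, b), hab.1⟩
  exact hY (a, false) (a, true) (fasStep_in_iff.mpr ⟨hab.2.1, rfl⟩)
    (.head (fasStep_out_iff.mpr ⟨hab.1, j, hj, rfl⟩)
      (reflTransGen_fasStep_of_inducedAdj (exists_inr_notMem_of_card_le hcard) hba))

theorem isDFAS_iff_isDFVS_toLeft (hcard : #Y ≤ Fintype.card V) :
    IsDFAS Y ↔ IsDFVS A Y.toLeft :=
  ⟨fun h => h.isDFVS_toLeft hcard, IsDFVS.isDFAS_of_toLeft⟩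

theorem isDFAS_image_inl_iff {X : Finset V} :
    IsDFAS (X.image Sum.inl : Finset (GArc V A)) ↔ IsDFVS A X := by
  rw [isDFAS_iff_isDFVS_toLeft, toLeft_image_inl]
  rw [card_image_of_injective _ Sum.inl_injective]
  exact card_le_univ X

end Correspondence

section Reconfiguration
variable {V : Type*} [Fintype V] [DecidableEq V] {A : Finset (V × V)}

theorem exists_reflTransGen_dfvs_of_dfas {Xs : Finset V} {Y : Finset (GArc V A)}
    (h : ReflTransGen (fun Y Y' => IsSwap Y Y' ∧ IsDFAS Y') (Xs.image Sum.inl) Y) :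
    ∃ Z, ReflTransGen (fun X X' => IsSwap X X' ∧ IsDFVS A X') Xs Z ∧ Y.toLeft ⊆ Z ∧ #Z = #Y := by
  induction h with
  | refl =>
    refine ⟨Xs, .refl, (toLeft_image_inl Xs).subset, ?_⟩
    rw [card_image_of_injective _ Sum.inl_injective]
  | @tail Y Y' _ hYY' ih =>
    obtain ⟨hswap, hY'⟩ := hYY'
    obtain ⟨Z, hXsZ, hYZ, hZY⟩ := ih
    have hcard : #Y' = #Z := hswap.card_eq.trans hZY.symm
    have hY'dfvs : IsDFVS A Y'.toLeft := hY'.isDFVS_toLeft (hcard ▸ card_le_univ Z)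
    have hnew : #(Y'.toLeft \ Y.toLeft) ≤ 1 := by
      rw [← toLeft_sdiff]
      exact card_toLeft_le.trans hswap.2.le
    obtain ⟨Z', hY'Z', hZZ'⟩ :=
      exists_superset_isSwap hYZ (hcard ▸ card_toLeft_le) hnew
    refine ⟨Z', ?_, hY'Z', ?_⟩ <;> rcases hZZ' with rfl | hZZ'
    · exact hXsZ
    · exact hXsZ.tail ⟨hZZ', hY'dfvs.mono hY'Z'⟩
    · exact hcard.symm
    · exact hZZ'.card_eq.trans hcard.symm

theorem reflTransGen_dfvs_iff_dfas {Xs Xg : Finset V} :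
    ReflTransGen (fun X X' => IsSwap X X' ∧ IsDFVS A X') Xs Xg ↔
      ReflTransGen (fun Y Y' => IsSwap Y Y' ∧ IsDFAS Y')
        (Xs.image Sum.inl : Finset (GArc V A)) (Xg.image Sum.inl) := by
  refine ⟨fun h => h.lift _ fun X X' hXX' =>
    ⟨hXX'.1.image Sum.inl_injective, isDFAS_image_inl_iff.mpr hXX'.2⟩, fun h => ?_⟩
  obtain ⟨Z, hXsZ, hXgZ, hZ⟩ := exists_reflTransGen_dfvs_of_dfas h
  rw [toLeft_image_inl] at hXgZ
  rw [card_image_of_injective _ Sum.inl_injective] at hZ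
  rwa [eq_of_superset_of_card_ge hXgZ hZ.le] at hXsZ

end Reconfiguration

theorem stmt18_general {V : Type*} [Fintype V] [DecidableEq V] (A : Finset (V × V))
    (Xs Xg : Finset V) :
    (∃ ℓ, ∃ f : ℕ → Finset V, f 0 = Xs ∧ f ℓ = Xg ∧
        (∀ i ≤ ℓ, IsDFVS A (f i)) ∧
        (∀ i < ℓ, (f i \ f (i + 1)).card = 1 ∧ (f (i + 1) \ f i).card = 1)) ↔
      (∃ m, ∃ g : ℕ → Finset (GArc V A),
        g 0 = Xs.image (fun v => (Sum.inl v : GArc V A)) ∧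
        g m = Xg.image (fun v => (Sum.inl v : GArc V A)) ∧
        (∀ i ≤ m, IsDFAS (g i)) ∧
        (∀ i < m, (g i \ g (i + 1)).card = 1 ∧ (g (i + 1) \ g i).card = 1)) :=
  calc _ ↔ IsDFVS A Xs ∧ ReflTransGen (fun X X' => IsSwap X X' ∧ IsDFVS A X') Xs Xg :=
        exists_seq_iff_reflTransGen
    _ ↔ IsDFAS (Xs.image Sum.inl : Finset (GArc V A)) ∧
          ReflTransGen (fun Y Y' => IsSwap Y Y' ∧ IsDFAS Y')
            (Xs.image Sum.inl) (Xg.image Sum.inl) :=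
        and_congr isDFAS_image_inl_iff.symm reflTransGen_dfvs_iff_dfas
    _ ↔ _ := exists_seq_iff_reflTransGen.symm

/-- For directed feedback vertex sets `X^s`, `X^g` of `G` with `|X^s| = |X^g| = k`,
there is a reconfiguration sequence of directed feedback vertex sets of `G` between
them iff there is a reconfiguration sequence of directed feedback arc sets of `G'`
between the corresponding sets of internal arcs. -/
theorem stmt18 {V : Type*} [Fintype V] [DecidableEq V] (A : Finset (V × V)) (k : ℕ)
    (Xs Xg : Finset V) (hXs : IsDFVS A Xs) (hXg : IsDFVS A Xg)
    (hks : Xs.card = k) (hkg : Xg.card = k) :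
    (∃ ℓ, ∃ f : ℕ → Finset V, f 0 = Xs ∧ f ℓ = Xg ∧
        (∀ i ≤ ℓ, IsDFVS A (f i)) ∧
        (∀ i < ℓ, (f i \ f (i + 1)).card = 1 ∧ (f (i + 1) \ f i).card = 1)) ↔
      (∃ m, ∃ g : ℕ → Finset (GArc V A),
        g 0 = Xs.image (fun v => (Sum.inl v : GArc V A)) ∧
        g m = Xg.image (fun v => (Sum.inl v : GArc V A)) ∧
        (∀ i ≤ m, IsDFAS (g i)) ∧
        (∀ i < m, (g i \ g (i + 1)).card = 1 ∧ (g (i + 1) \ g i).card = 1)) :=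
  stmt18_general A Xs Xg
end
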